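/- arXiv:2407.19963 — 2 statements merged into one kernel-verified Lean document; each statement's English description precedes it below -/
import Mathlib

section
/- Let p and q be complex polynomials with p not identically zero, let d := deg q ≥ 1, let c₀ be the leading coefficient of q, let c ∈ ℂ, and let f be the unique entire function with f(0) = c and f'(z) = p(z)·exp(q(z)) for all z ∈ ℂ. For 1 ≤ k ≤ d set φ_k := ((2k+1)π − arg c₀)/d. Then for each k ∈ {1,…,d} there exists a_k ∈ ℂ such that for every ε with 0 < ε < π/(2d): f(ρ·e^{iθ}) → a_k as ρ → ∞, uniformly over all θ ∈ ℝ with |θ − φ_k| ≤ π/(2d) − ε; that is, for every δ > 0 there exists R > 0 such that |f(ρ·e^{iθ}) − a_k| ≤ δ whenever ρ ≥ R and |θ − φ_k| ≤ π/(2d) − ε. -/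
/-!
In the direction `φ_k` the leading term `c₀ z^d` of `q` is a negative real, so on the closed
sub-sector `|θ - φ_k| ≤ α` (with `dα < π/2`) one has `Re (c₀ z^d) ≤ -|c₀| cos(dα) ρ^d`, and the
lower-order terms of `q` and the factor `p` cannot compete: `f' = p e^q` decays like `e^{-βρ}`
uniformly on the sub-sector. Integrability of `f'` along the central ray gives the limit `a_k` of
`f` there, which therefore does not depend on `ε`, and the mean value inequality along the arc from
`φ_k` to `θ` gives `‖f(ρe^{iθ}) - f(ρe^{iφ_k})‖ ≤ e^{-βρ} ρ α → 0`.
-/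

open Complex Filter Topology Asymptotics Bornology Polynomial
open scoped Real

theorem norm_ofReal_mul_exp_ofReal_mul_I {ρ : ℝ} (hρ : 0 ≤ ρ) (θ : ℝ) :
    ‖(ρ : ℂ) * exp (θ * I)‖ = ρ := by
  rw [norm_mul, norm_exp_ofReal_mul_I, mul_one, norm_real, Real.norm_of_nonneg hρ]

theorem eventually_atTop_forall_ofReal_mul_exp {P : ℂ → Prop} (h : ∀ᶠ z in cobounded ℂ, P z) :
    ∀ᶠ ρ : ℝ in atTop, ∀ θ : ℝ, P (ρ * exp (θ * I)) := by
  rw [← comap_norm_atTop, eventually_comap] at h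
  filter_upwards [h, eventually_ge_atTop 0] with ρ hρ hρ₀ θ
  exact hρ _ (norm_ofReal_mul_exp_ofReal_mul_I hρ₀ θ)

theorem re_mul_ofReal_mul_exp_pow (c : ℂ) (n : ℕ) (ρ θ : ℝ) :
    (c * ((ρ : ℂ) * exp (θ * I)) ^ n).re = ‖c‖ * ρ ^ n * Real.cos (arg c + n * θ) := by
  have h : c * ((ρ : ℂ) * exp (θ * I)) ^ n
      = ((‖c‖ * ρ ^ n : ℝ) : ℂ) * exp ((arg c + n * θ : ℝ) * I) := by
    conv_lhs => rw [← norm_mul_exp_arg_mul_I c]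
    rw [mul_pow, ← exp_nat_mul]
    push_cast
    rw [add_mul, exp_add]
    ring_nf
  rw [h, re_ofReal_mul, exp_ofReal_mul_I_re]

theorem re_mul_ofReal_mul_exp_pow_le {c : ℂ} {n : ℕ} {φ α ρ θ : ℝ}
    (hφ : Real.cos (arg c + n * φ) = -1) (hα : n * α ≤ π) (hρ : 0 ≤ ρ) (hθ : |θ - φ| ≤ α) :
    (c * ((ρ : ℂ) * exp (θ * I)) ^ n).re ≤ -(‖c‖ * Real.cos (n * α) * ρ ^ n) := by
  have hsin : Real.sin (arg c + n * φ) = 0 := by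
    nlinarith [Real.sin_sq_add_cos_sq (arg c + n * φ)]
  have hcos : Real.cos (arg c + n * θ) = -Real.cos (n * |θ - φ|) := by
    rw [show arg c + n * θ = (arg c + n * φ) + n * (θ - φ) by ring, Real.cos_add, hφ, hsin,
      ← Real.cos_abs (n * (θ - φ)), abs_mul, Nat.abs_cast]
    ring
  have hmono : Real.cos (n * α) ≤ Real.cos (n * |θ - φ|) :=
    Real.cos_le_cos_of_nonneg_of_le_pi (by positivity) hα (by gcongr)
  rw [re_mul_ofReal_mul_exp_pow, hcos]
  have : 0 ≤ ‖c‖ * ρ ^ n := by positivity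
  nlinarith

theorem exists_re_eval_le_neg_mul {q : ℂ[X]} (hq : 0 < q.natDegree) {φ α : ℝ}
    (hφ : Real.cos (arg q.leadingCoeff + q.natDegree * φ) = -1) (hα₀ : 0 ≤ α)
    (hα : q.natDegree * α < π / 2) :
    ∃ κ > 0, ∀ᶠ ρ : ℝ in atTop, ∀ θ, |θ - φ| ≤ α → (q.eval (ρ * exp (θ * I))).re ≤ -κ * ρ := by
  set d := q.natDegree
  set c := q.leadingCoeff
  have hc : 0 < ‖c‖ := norm_pos_iff.2 (leadingCoeff_ne_zero.2 (ne_zero_of_natDegree_gt hq))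
  have hcos : 0 < Real.cos (d * α) :=
    Real.cos_pos_of_mem_Ioo ⟨by linarith [Real.pi_pos, mul_nonneg d.cast_nonneg hα₀], hα⟩
  set K := ‖c‖ * Real.cos (d * α)
  refine ⟨K / 2, by positivity, ?_⟩
  have hlead := (isEquivalent_cobounded_leading_monomial (P := q)).bound
    (c := Real.cos (d * α) / 2) (by positivity)
  filter_upwards [eventually_atTop_forall_ofReal_mul_exp hlead, eventually_ge_atTop 1]
    with ρ hρ hρ₁ θ hθ
  set z : ℂ := ρ * exp (θ * I)
  have hlead_re : (c * z ^ d).re ≤ -(K * ρ ^ d) :=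
    re_mul_ofReal_mul_exp_pow_le hφ (by linarith [Real.pi_pos]) (by linarith) hθ
  have hrest : (q.eval z - c * z ^ d).re ≤ K / 2 * ρ ^ d := by
    refine (re_le_norm _).trans ((hρ θ).trans_eq ?_)
    rw [norm_mul, norm_pow, norm_ofReal_mul_exp_ofReal_mul_I (by linarith)]
    ring
  have hρd : ρ ≤ ρ ^ d := le_self_pow₀ hρ₁ hq.ne'
  have : (q.eval z).re = (c * z ^ d).re + (q.eval z - c * z ^ d).re := by
    rw [← add_re, add_sub_cancel]
  nlinarith [mul_le_mul_of_nonneg_left hρd (by positivity : 0 ≤ K / 2)]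

theorem exists_norm_eval_mul_exp_eval_le (p : ℂ[X]) {q : ℂ[X]} (hq : 0 < q.natDegree) {φ α : ℝ}
    (hφ : Real.cos (arg q.leadingCoeff + q.natDegree * φ) = -1) (hα₀ : 0 ≤ α)
    (hα : q.natDegree * α < π / 2) :
    ∃ β > 0, ∀ᶠ ρ : ℝ in atTop, ∀ θ, |θ - φ| ≤ α →
      ‖p.eval (ρ * exp (θ * I)) * exp (q.eval (ρ * exp (θ * I)))‖ ≤ Real.exp (-β * ρ) := by
  obtain ⟨κ, hκ, hre⟩ := exists_re_eval_le_neg_mul hq hφ hα₀ hα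
  obtain ⟨C, hC⟩ := (isBigO_cobounded_of_degree_le (P := p) (Q := X ^ p.natDegree)
    (by rw [degree_X_pow]; exact degree_le_natDegree)).bound
  have hexp := ((isLittleO_pow_exp_pos_mul_atTop p.natDegree (half_pos hκ)).const_mul_left C).bound
    one_pos
  refine ⟨κ / 2, half_pos hκ, ?_⟩
  filter_upwards [eventually_atTop_forall_ofReal_mul_exp hC, hre, hexp, eventually_ge_atTop 0]
    with ρ hpρ hreρ hpowρ hρ θ hθ
  set z : ℂ := ρ * exp (θ * I)
  have hpz : ‖p.eval z‖ ≤ Real.exp (κ / 2 * ρ) := by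
    have hpθ := hpρ θ
    simp only [eval_pow, eval_X, norm_pow, norm_ofReal_mul_exp_ofReal_mul_I hρ] at hpθ
    simp only [norm_mul, norm_pow, Real.norm_of_nonneg hρ, Real.norm_eq_abs, Real.abs_exp,
      one_mul] at hpowρ
    exact hpθ.trans ((mul_le_mul_of_nonneg_right (le_abs_self C) (by positivity)).trans hpowρ)
  calc ‖p.eval z * exp (q.eval z)‖ = ‖p.eval z‖ * Real.exp (q.eval z).re := by
        rw [norm_mul, norm_exp]
    _ ≤ Real.exp (κ / 2 * ρ) * Real.exp (-κ * ρ) := by gcongr; exact hreρ θ hθ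
    _ = Real.exp (-(κ / 2) * ρ) := by rw [← Real.exp_add]; ring_nf

theorem exists_tendsto_atTop_of_norm_deriv_le_exp {F : Type*} [NormedAddCommGroup F]
    [NormedSpace ℝ F] [CompleteSpace F] {g : ℝ → F} (hg : Differentiable ℝ g) {β : ℝ} (hβ : 0 < β)
    (hdecay : ∀ᶠ t in atTop, ‖deriv g t‖ ≤ Real.exp (-β * t)) :
    ∃ a, Tendsto g atTop (𝓝 a) := by
  obtain ⟨R, hR⟩ := eventually_atTop.1 hdecay
  refine ⟨_, MeasureTheory.tendsto_limUnder_of_hasDerivAt_of_integrableOn_Ioi (a := R)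
    (fun t _ => (hg t).hasDerivAt) ?_⟩
  refine (exp_neg_integrableOn_Ioi R hβ).mono' (aestronglyMeasurable_deriv g _) ?_
  filter_upwards [MeasureTheory.self_mem_ae_restrict measurableSet_Ioi] with t ht
  exact hR t ht.le

section Sectors

variable {E : Type*} [NormedAddCommGroup E] [NormedSpace ℂ E] {f : ℂ → E}

theorem exists_tendsto_ofReal_mul_exp [CompleteSpace E] (hf : Differentiable ℂ f)
    {φ β : ℝ} (hβ : 0 < β)
    (hdecay : ∀ᶠ t : ℝ in atTop, ‖deriv f (t * exp (φ * I))‖ ≤ Real.exp (-β * t)) :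
    ∃ a, Tendsto (fun t : ℝ => f (t * exp (φ * I))) atTop (𝓝 a) := by
  have hderiv (t : ℝ) : HasDerivAt (fun t : ℝ => f (t * exp (φ * I)))
      (exp (φ * I) • deriv f (t * exp (φ * I))) t := by
    have hray : HasDerivAt (fun s : ℝ => (s : ℂ) * exp (φ * I)) (exp (φ * I)) t := by
      simpa using ((hasDerivAt_id (t : ℂ)).mul_const (exp (φ * I))).comp_ofReal
    exact (hf _).hasDerivAt.scomp t hray
  refine exists_tendsto_atTop_of_norm_deriv_le_exp (fun t => (hderiv t).differentiableAt) hβ ?_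
  filter_upwards [hdecay] with t ht
  rwa [(hderiv t).deriv, norm_smul, norm_exp_ofReal_mul_I, one_mul]

theorem norm_sub_le_of_norm_deriv_le_on_arc (hf : Differentiable ℂ f)
    {ρ φ α θ M : ℝ} (hρ : 0 ≤ ρ)
    (hM : ∀ t, |t - φ| ≤ α → ‖deriv f (ρ * exp (t * I))‖ ≤ M) (hθ : |θ - φ| ≤ α) :
    ‖f (ρ * exp (θ * I)) - f (ρ * exp (φ * I))‖ ≤ M * ρ * |θ - φ| := by
  have hderiv (t : ℝ) : HasDerivAt (fun t : ℝ => f (ρ * exp (t * I)))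
      ((ρ * exp (t * I) * I) • deriv f (ρ * exp (t * I))) t := by
    have harc : HasDerivAt (fun s : ℝ => (ρ : ℂ) * exp (s * I)) (ρ * exp (t * I) * I) t := by
      simpa [mul_assoc] using
        (((hasDerivAt_id (t : ℂ)).mul_const I).cexp.const_mul (ρ : ℂ)).comp_ofReal
    exact (hf _).hasDerivAt.scomp t harc
  have hmem {t : ℝ} : |t - φ| ≤ α ↔ t ∈ Set.Icc (φ - α) (φ + α) := by
    rw [abs_sub_comm]; exact Set.mem_Icc_iff_abs_le
  have hbound : ∀ t ∈ Set.Icc (φ - α) (φ + α),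
      ‖(ρ * exp (t * I) * I) • deriv f (ρ * exp (t * I))‖ ≤ M * ρ := by
    intro t ht
    rw [norm_smul, norm_mul, norm_I, mul_one, norm_ofReal_mul_exp_ofReal_mul_I hρ, mul_comm]
    exact mul_le_mul_of_nonneg_right (hM t (hmem.2 ht)) hρ
  have hφ : φ ∈ Set.Icc (φ - α) (φ + α) := hmem.1 (by simpa using (abs_nonneg _).trans hθ)
  simpa only [Real.norm_eq_abs] using
    (convex_Icc (φ - α) (φ + α)).norm_image_sub_le_of_norm_hasDerivWithin_le
      (fun t _ => (hderiv t).hasDerivWithinAt) hbound hφ (hmem.1 hθ)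

theorem tendstoUniformlyOn_ofReal_mul_exp (hf : Differentiable ℂ f) {φ α β : ℝ} (hβ : 0 < β)
    {a : E} (hray : Tendsto (fun t : ℝ => f (t * exp (φ * I))) atTop (𝓝 a))
    (hdecay : ∀ᶠ ρ : ℝ in atTop, ∀ θ, |θ - φ| ≤ α →
      ‖deriv f (ρ * exp (θ * I))‖ ≤ Real.exp (-β * ρ)) :
    TendstoUniformlyOn (fun (ρ θ : ℝ) => f (ρ * exp (θ * I))) (fun _ => a) atTop
      {θ | |θ - φ| ≤ α} := by
  have harc_small : Tendsto (fun ρ => Real.exp (-β * ρ) * ρ * α) atTop (𝓝 0) := by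
    simpa [mul_comm] using
      ((tendsto_rpow_mul_exp_neg_mul_atTop_nhds_zero 1 β hβ).mul_const α)
  refine Metric.tendstoUniformlyOn_iff.2 fun δ hδ => ?_
  filter_upwards [hdecay, eventually_ge_atTop 0,
    hray.eventually (Metric.ball_mem_nhds a (half_pos hδ)),
    harc_small.eventually (gt_mem_nhds (half_pos hδ))] with ρ hρ hρ₀ hray_ρ harc_ρ θ hθ
  have harc := norm_sub_le_of_norm_deriv_le_on_arc hf hρ₀ hρ hθ
  have harc_le : Real.exp (-β * ρ) * ρ * |θ - φ| ≤ Real.exp (-β * ρ) * ρ * α := by gcongr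
  calc dist a (f (ρ * exp (θ * I)))
      ≤ dist (f (ρ * exp (θ * I))) (f (ρ * exp (φ * I))) + dist (f (ρ * exp (φ * I))) a := by
        rw [dist_comm]; exact dist_triangle _ _ _
    _ < δ := by rw [dist_eq_norm]; linarith

end Sectors

theorem stmt10_general
    (p q : Polynomial ℂ)
    (f : ℂ → ℂ) (hf : Differentiable ℂ f)
    (hf' : ∀ z : ℂ, deriv f z = p.eval z * Complex.exp (q.eval z)) :
    ∀ k : ℕ, 1 ≤ k → k ≤ q.natDegree →
      ∃ a : ℂ, ∀ ε : ℝ, 0 < ε → ε < Real.pi / (2 * (q.natDegree : ℝ)) →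
        ∀ δ : ℝ, 0 < δ → ∃ R : ℝ, 0 < R ∧
          ∀ ρ θ : ℝ, R ≤ ρ →
            |θ - ((2 * (k : ℝ) + 1) * Real.pi - Complex.arg q.leadingCoeff) /
                (q.natDegree : ℝ)| ≤ Real.pi / (2 * (q.natDegree : ℝ)) - ε →
            ‖f ((ρ : ℂ) * Complex.exp ((θ : ℂ) * Complex.I)) - a‖ ≤ δ := by
  intro k hk hkd
  have hd : 0 < q.natDegree := by omega
  have hdR : (0 : ℝ) < q.natDegree := Nat.cast_pos.2 hd
  set φ := ((2 * (k : ℝ) + 1) * π - arg q.leadingCoeff) / q.natDegree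
  have hφ : Real.cos (arg q.leadingCoeff + q.natDegree * φ) = -1 := by
    rw [show arg q.leadingCoeff + q.natDegree * φ = π + k * (2 * π) by
        rw [mul_div_cancel₀ _ hdR.ne']; ring,
      Real.cos_add_nat_mul_two_pi, Real.cos_pi]
  have hdecay {α : ℝ} (hα₀ : 0 ≤ α) (hα : q.natDegree * α < π / 2) :
      ∃ β > 0, ∀ᶠ ρ : ℝ in atTop, ∀ θ, |θ - φ| ≤ α →
        ‖deriv f (ρ * exp (θ * I))‖ ≤ Real.exp (-β * ρ) := by
    simpa only [hf'] using exists_norm_eval_mul_exp_eval_le p hd hφ hα₀ hα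
  obtain ⟨β₀, hβ₀, hray⟩ := hdecay le_rfl (by simpa using Real.pi_div_two_pos)
  obtain ⟨a, ha⟩ := exists_tendsto_ofReal_mul_exp hf hβ₀ (hray.mono fun ρ h => h φ (by simp))
  refine ⟨a, fun ε hε hεd δ hδ => ?_⟩
  obtain ⟨β, hβ, hsector⟩ := hdecay (α := π / (2 * q.natDegree) - ε) (by linarith)
    (by
      have : (q.natDegree : ℝ) * (π / (2 * q.natDegree) - ε) = π / 2 - q.natDegree * ε := by
        field_simp
      linarith [mul_pos hdR hε])
  obtain ⟨R, hR⟩ := eventually_atTop.1 (Metric.tendstoUniformlyOn_iff.1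
    (tendstoUniformlyOn_ofReal_mul_exp hf hβ ha hsector) δ hδ)
  refine ⟨max R 1, by positivity, fun ρ θ hρ hθ => ?_⟩
  rw [← dist_eq_norm, dist_comm]
  exact (hR ρ (le_of_max_le_left hρ) θ hθ).le

theorem stmt10
    (p q : Polynomial ℂ) (hp : p ≠ 0) (hq : 1 ≤ q.natDegree) (c : ℂ)
    (f : ℂ → ℂ) (hf : Differentiable ℂ f) (hf0 : f 0 = c)
    (hf' : ∀ z : ℂ, deriv f z = p.eval z * Complex.exp (q.eval z)) :
    ∀ k : ℕ, 1 ≤ k → k ≤ q.natDegree →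
      ∃ a : ℂ, ∀ ε : ℝ, 0 < ε → ε < Real.pi / (2 * (q.natDegree : ℝ)) →
        ∀ δ : ℝ, 0 < δ → ∃ R : ℝ, 0 < R ∧
          ∀ ρ θ : ℝ, R ≤ ρ →
            |θ - ((2 * (k : ℝ) + 1) * Real.pi - Complex.arg q.leadingCoeff) /
                (q.natDegree : ℝ)| ≤ Real.pi / (2 * (q.natDegree : ℝ)) - ε →
            ‖f ((ρ : ℂ) * Complex.exp ((θ : ℂ) * Complex.I)) - a‖ ≤ δ :=
  stmt10_general p q f hf hf'
end

section
/- Let f₂ be the unique entire function with f₂(0) = 0 and f₂'(z) = 2·exp(−z²) for all z ∈ ℂ. Then there exists a unique x > 0 (x real) with f₂(x) = x; moreover, for this x one has 0 < |f₂'(x)| < 1, so x is an attracting fixed point of f₂. -/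
/-!
On the real line `f₂` is the real function `g x = ∫₀ˣ 2 exp (-t²)`, whose derivative
`2 exp (-x²)` is strictly decreasing on `[0, ∞)`. By Rolle's theorem, between `0` and a positive
fixed point `x` of `g` there is a point `c` with `g' c = 1`, so `g' x < g' c = 1`; two positive
fixed points would give two such points, contradicting strict monotonicity of `g'`.
A fixed point exists by the intermediate value theorem, since `g (1/2) ≥ exp (-1/4) > 1/2` while
`exp (-t²) ≤ 1 / (1 + t²)` gives `g 4 ≤ 2 arctan 4 < π < 4`.
-/

open Real Set Function intervalIntegral

theorem Complex.eq_ofReal_of_deriv_eq {f : ℂ → ℂ} {g g' : ℝ → ℝ} (hf : Differentiable ℂ f)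
    (hg : ∀ x, HasDerivAt g (g' x) x) (hfg : ∀ x : ℝ, deriv f x = g' x) (h0 : f 0 = g 0)
    (x : ℝ) : f x = g x := by
  have hderiv : ∀ y : ℝ, HasDerivAt (fun y : ℝ => f y - g y) 0 y := fun y => by
    have := ((hf y).hasDerivAt.comp_ofReal).sub (hg y).ofReal_comp
    rwa [hfg, sub_self] at this
  have := is_const_of_deriv_eq_zero (fun y => (hderiv y).differentiableAt)
    (fun y => (hderiv y).deriv) x 0
  simpa [h0, sub_eq_zero] using this

section FixedPoints

variable {g g' : ℝ → ℝ}

theorem exists_eq_one_of_isFixedPt (hg : ∀ x, HasDerivAt g (g' x) x) {a b : ℝ} (hab : a < b)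
    (ha : IsFixedPt g a) (hb : IsFixedPt g b) : ∃ c ∈ Ioo a b, g' c = 1 := by
  have hcont : Continuous fun x => g x - x :=
    (continuous_iff_continuousAt.2 fun x => (hg x).continuousAt).sub continuous_id
  obtain ⟨c, hc, hc0⟩ := exists_hasDerivAt_eq_zero hab hcont.continuousOn
    (by rw [ha.eq, hb.eq, sub_self, sub_self]) fun x _ => (hg x).sub (hasDerivAt_id x)
  exact ⟨c, hc, sub_eq_zero.1 hc0⟩

variable (hg : ∀ x, HasDerivAt g (g' x) x) (hanti : StrictAntiOn g' (Ici 0))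
  (h0 : IsFixedPt g 0)
include hg hanti h0

theorem deriv_lt_one_of_isFixedPt {x : ℝ} (hx : 0 < x) (hfix : IsFixedPt g x) : g' x < 1 := by
  obtain ⟨c, hc, hc1⟩ := exists_eq_one_of_isFixedPt hg hx h0 hfix
  exact hc1 ▸ hanti (mem_Ici.2 hc.1.le) (mem_Ici.2 hx.le) hc.2

theorem subsingleton_pos_fixedPoints : (Ioi 0 ∩ fixedPoints g).Subsingleton := by
  rintro a ⟨ha, hfa⟩ b ⟨hb, hfb⟩
  by_contra hne
  wlog hab : a < b generalizing a b
  · exact this hb hfb ha hfa (Ne.symm hne) (lt_of_le_of_ne (not_lt.1 hab) (Ne.symm hne))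
  obtain ⟨c, hc, hc1⟩ := exists_eq_one_of_isFixedPt hg ha h0 hfa
  obtain ⟨d, hd, hd1⟩ := exists_eq_one_of_isFixedPt hg hab hfa hfb
  exact (hanti (mem_Ici.2 hc.1.le) (mem_Ici.2 (ha.trans hd.1).le) (hc.2.trans hd.1)).ne
    (hd1.trans hc1.symm)

end FixedPoints

noncomputable def twiceGaussIntegral (x : ℝ) : ℝ := ∫ t in (0 : ℝ)..x, 2 * exp (-t ^ 2)

theorem continuous_two_mul_exp_neg_sq : Continuous fun t : ℝ => 2 * exp (-t ^ 2) := by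
  fun_prop

theorem hasDerivAt_twiceGaussIntegral (x : ℝ) :
    HasDerivAt twiceGaussIntegral (2 * exp (-x ^ 2)) x :=
  (continuous_two_mul_exp_neg_sq.integral_hasStrictDerivAt 0 x).hasDerivAt

theorem twiceGaussIntegral_zero : twiceGaussIntegral 0 = 0 := integral_same

theorem strictAntiOn_two_mul_exp_neg_sq : StrictAntiOn (fun t : ℝ => 2 * exp (-t ^ 2)) (Ici 0) :=
  fun a ha b _ hab => by
    have : a ^ 2 < b ^ 2 := pow_lt_pow_left₀ hab (mem_Ici.1 ha) two_ne_zero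
    simpa using this

theorem two_mul_mul_exp_neg_sq_le_twiceGaussIntegral {x : ℝ} (hx : 0 ≤ x) :
    2 * x * exp (-x ^ 2) ≤ twiceGaussIntegral x := by
  calc 2 * x * exp (-x ^ 2) = ∫ _ in (0 : ℝ)..x, 2 * exp (-x ^ 2) := by simp [mul_assoc]
    _ ≤ twiceGaussIntegral x :=
      integral_mono_on hx intervalIntegrable_const
        (continuous_two_mul_exp_neg_sq.intervalIntegrable 0 x) fun t ht =>
          strictAntiOn_two_mul_exp_neg_sq.antitoneOn ht.1 (ht.1.trans ht.2) ht.2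

theorem twiceGaussIntegral_le_two_mul_arctan {x : ℝ} (hx : 0 ≤ x) :
    twiceGaussIntegral x ≤ 2 * arctan x := by
  have hexp : ∀ t : ℝ, exp (-t ^ 2) ≤ 1 / (1 + t ^ 2) := fun t => by
    rw [exp_neg, ← one_div]
    exact one_div_le_one_div_of_le (by positivity) (by linarith [add_one_le_exp (t ^ 2)])
  have hcont : Continuous fun t : ℝ => 2 * (1 / (1 + t ^ 2)) :=
    continuous_const.mul (continuous_const.div (by fun_prop) fun t => by positivity)
  calc twiceGaussIntegral x ≤ ∫ t in (0 : ℝ)..x, 2 * (1 / (1 + t ^ 2)) :=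
        integral_mono_on hx (continuous_two_mul_exp_neg_sq.intervalIntegrable 0 x)
          (hcont.intervalIntegrable 0 x) fun t _ =>
            mul_le_mul_of_nonneg_left (hexp t) zero_le_two
    _ = 2 * arctan x := by simp [integral_const_mul]

theorem exists_pos_isFixedPt_twiceGaussIntegral : ∃ x > 0, IsFixedPt twiceGaussIntegral x := by
  have hcont : Continuous fun x => twiceGaussIntegral x - x :=
    (continuous_iff_continuousAt.2 fun x => (hasDerivAt_twiceGaussIntegral x).continuousAt).sub
      continuous_id
  have hhalf : 0 < twiceGaussIntegral (1 / 2) - 1 / 2 := by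
    have := two_mul_mul_exp_neg_sq_le_twiceGaussIntegral (x := 1 / 2) (by norm_num)
    nlinarith [add_one_le_exp (-(1 / 2 : ℝ) ^ 2)]
  have hfour : twiceGaussIntegral 4 - 4 < 0 := by
    linarith [twiceGaussIntegral_le_two_mul_arctan (x := 4) (by norm_num), arctan_lt_pi_div_two 4,
      pi_lt_four]
  obtain ⟨x, hx, hx0⟩ := intermediate_value_Ioo' (by norm_num) hcont.continuousOn ⟨hfour, hhalf⟩
  exact ⟨x, by linarith [hx.1], sub_eq_zero.1 hx0⟩

theorem stmt11 (f : ℂ → ℂ) (hf : Differentiable ℂ f) (hf0 : f 0 = 0)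
    (hf' : ∀ z : ℂ, deriv f z = 2 * Complex.exp (-z ^ 2)) :
    (∃! x : ℝ, 0 < x ∧ f (x : ℂ) = (x : ℂ)) ∧
    ∀ x : ℝ, 0 < x → f (x : ℂ) = (x : ℂ) →
      0 < ‖deriv f (x : ℂ)‖ ∧ ‖deriv f (x : ℂ)‖ < 1 := by
  have hderiv : ∀ x : ℝ, deriv f x = ((2 * exp (-x ^ 2) : ℝ) : ℂ) := fun x => by
    simp [hf', Complex.ofReal_exp]
  have hfg := Complex.eq_ofReal_of_deriv_eq hf hasDerivAt_twiceGaussIntegral hderiv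
    (by simp [hf0, twiceGaussIntegral_zero])
  have hfix : ∀ x : ℝ, f x = x ↔ IsFixedPt twiceGaussIntegral x := fun x => by
    rw [hfg, Complex.ofReal_inj]; rfl
  have hunique := subsingleton_pos_fixedPoints hasDerivAt_twiceGaussIntegral
    strictAntiOn_two_mul_exp_neg_sq twiceGaussIntegral_zero
  obtain ⟨x₀, hx₀, hfix₀⟩ := exists_pos_isFixedPt_twiceGaussIntegral
  refine ⟨⟨x₀, ⟨hx₀, (hfix x₀).2 hfix₀⟩, fun y hy => hunique ⟨hy.1, (hfix y).1 hy.2⟩ ⟨hx₀, hfix₀⟩⟩,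
    fun x hx hfx => ?_⟩
  rw [hderiv, Complex.norm_real, Real.norm_of_nonneg (by positivity)]
  exact ⟨by positivity, deriv_lt_one_of_isFixedPt hasDerivAt_twiceGaussIntegral
    strictAntiOn_two_mul_exp_neg_sq twiceGaussIntegral_zero hx ((hfix x).1 hfx)⟩
end
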